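/- arXiv:1103.0877 — 2 statements merged into one kernel-verified Lean document; each statement's English description precedes it below -/
import Mathlib

section
/- Let X ⊆ ℝ² be a compact convex body with 0 in its interior. The set of boundary points x of X at which X admits at least two distinct supporting lines (equivalently, points that are 1-singular: the exposed face of X* relative to x has affine dimension ≥ 1) is at most countable. -/
/-!
At a singular point `x` the two supporting functionals `f ≠ g` are linearly independent, so the
normal cone of `X` at `x` (the functionals maximised over `X` at `x`) contains every positive
combination of them and therefore has nonempty interior. A functional interior to the normal cones
at `x` and at `y` stays maximised at both points under all small perturbations, which forces
`x = y`. The singular points thus index disjoint nonempty open subsets of the plane, and there are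
only countably many of those by separability.
-/

open scoped RealInnerProductSpace MeasureTheory

/-- The polar (dual) body of a set in Euclidean space, identified with a subset of the
same space via the inner product. -/
def polarBody {n : ℕ} (X : Set (EuclideanSpace ℝ (Fin n))) : Set (EuclideanSpace ℝ (Fin n)) :=
  {f | ∀ x ∈ X, ⟪f, x⟫ ≤ 1}

open Set Filter Topology Module

lemma Module.Basis.interior_nonempty_of_forall_pos_sum_mem {ι E : Type*} [Fintype ι]
    [NormedAddCommGroup E] [NormedSpace ℝ E] [FiniteDimensional ℝ E] (b : Basis ι ℝ E)
    {C : Set E} (hC : ∀ c : ι → ℝ, (∀ i, 0 < c i) → ∑ i, c i • b i ∈ C) :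
    (interior C).Nonempty := by
  set U := b.equivFun ⁻¹' univ.pi fun _ => Ioi 0
  have hUopen : IsOpen U :=
    (isOpen_set_pi finite_univ fun _ _ => isOpen_Ioi).preimage
      (LinearMap.continuous_of_finiteDimensional _)
  have hUC : U ⊆ C := fun h hh => by
    simpa only [b.sum_repr] using hC (b.repr h) fun i => hh i (mem_univ i)
  refine ⟨b.equivFun.symm 1, interior_maximal hUC hUopen ?_⟩
  simp [U]

section NormalCone

variable {E : Type*} [NormedAddCommGroup E] [InnerProductSpace ℝ E]

def normalCone (X : Set E) (x : E) : Set E :=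
  {h | ∀ z ∈ X, ⟪h, z⟫ ≤ ⟪h, x⟫}

variable {X : Set E} {x y h : E}

lemma inner_le_of_mem_normalCone_of_mem_closure (hh : h ∈ normalCone X x) {z : E}
    (hz : z ∈ closure X) : ⟪h, z⟫ ≤ ⟪h, x⟫ :=
  closure_minimal (t := {z | ⟪h, z⟫ ≤ ⟪h, x⟫}) hh
    (isClosed_le (continuous_const.inner continuous_id) continuous_const) hz

lemma inner_eq_of_mem_normalCone_of_mem_closure (hx : x ∈ closure X) (hy : y ∈ closure X)
    (hhx : h ∈ normalCone X x) (hhy : h ∈ normalCone X y) : ⟪h, x⟫ = ⟪h, y⟫ :=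
  le_antisymm (inner_le_of_mem_normalCone_of_mem_closure hhy hx)
    (inner_le_of_mem_normalCone_of_mem_closure hhx hy)

/-- Moving `h` in the direction `x - y` inside both cones shows `⟪x - y, x - y⟫ = 0`. -/
lemma eq_of_mem_interior_normalCone (hx : x ∈ closure X) (hy : y ∈ closure X)
    (hhx : h ∈ interior (normalCone X x)) (hhy : h ∈ interior (normalCone X y)) : x = y := by
  have hU : ∀ᶠ t : ℝ in 𝓝 0, h + t • (x - y) ∈ interior (normalCone X x) ∩
      interior (normalCone X y) := by
    have hcont : Tendsto (fun t : ℝ => h + t • (x - y)) (𝓝 0) (𝓝 h) := by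
      simpa using ((continuous_id.smul continuous_const).const_add h).tendsto (0 : ℝ)
    exact hcont.eventually ((isOpen_interior.inter isOpen_interior).mem_nhds ⟨hhx, hhy⟩)
  obtain ⟨t, ⟨hxt, hyt⟩, ht⟩ :=
    ((hU.filter_mono nhdsWithin_le_nhds).and self_mem_nhdsWithin : ∀ᶠ t in 𝓝[≠] (0 : ℝ), _).exists
  have hh := inner_eq_of_mem_normalCone_of_mem_closure hx hy (interior_subset hhx)
    (interior_subset hhy)
  have hht := inner_eq_of_mem_normalCone_of_mem_closure hx hy (interior_subset hxt)
    (interior_subset hyt)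
  rw [← sub_eq_zero, ← inner_sub_right] at hh hht
  rw [inner_add_left, hh, zero_add, real_inner_smul_left, mul_eq_zero] at hht
  exact sub_eq_zero.mp (inner_self_eq_zero.mp (hht.resolve_left ht))

lemma pairwiseDisjoint_interior_normalCone :
    (closure X).PairwiseDisjoint fun x => interior (normalCone X x) :=
  fun _ hx _ hy hxy => Set.disjoint_left.mpr fun _ hhx hhy =>
    hxy (eq_of_mem_interior_normalCone hx hy hhx hhy)

lemma countable_setOf_interior_normalCone_nonempty [TopologicalSpace.SeparableSpace E] :
    {x ∈ closure X | (interior (normalCone X x)).Nonempty}.Countable :=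
  (pairwiseDisjoint_interior_normalCone.subset (sep_subset _ _)).countable_of_isOpen
    (fun _ _ => isOpen_interior) fun _ hx => hx.2

lemma sum_smul_mem_normalCone {ι : Type*} {s : Finset ι} {c : ι → ℝ} {v : ι → E}
    (hc : ∀ i ∈ s, 0 ≤ c i) (hv : ∀ i ∈ s, v i ∈ normalCone X x) :
    ∑ i ∈ s, c i • v i ∈ normalCone X x := fun z hz => by
  simp only [sum_inner, real_inner_smul_left]
  exact Finset.sum_le_sum fun i hi => mul_le_mul_of_nonneg_left (hv i hi z hz) (hc i hi)

lemma interior_normalCone_nonempty_of_linearIndependent [FiniteDimensional ℝ E] {ι : Type*}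
    [Fintype ι] {v : ι → E} (hv : LinearIndependent ℝ v) (hcard : Fintype.card ι = finrank ℝ E)
    (hvX : ∀ i, v i ∈ normalCone X x) : (interior (normalCone X x)).Nonempty :=
  (basisOfLinearIndependentOfCardEqFinrank' v hv hcard).interior_nonempty_of_forall_pos_sum_mem
    fun c hc => by
      simpa using sum_smul_mem_normalCone (fun i _ => (hc i).le) fun i _ => hvX i

lemma linearIndependent_pair_of_inner_eq_one {f g : E} (hfg : f ≠ g) (hf : ⟪f, x⟫ = 1)
    (hg : ⟪g, x⟫ = 1) : LinearIndependent ℝ ![f, g] := by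
  have hf0 : f ≠ 0 := by rintro rfl; simp at hf
  refine (LinearIndependent.pair_iff' hf0).mpr fun a ha => hfg ?_
  have ha1 : a = 1 := by simpa [← ha, real_inner_smul_left, hf] using hg
  rw [← ha, ha1, one_smul]

end NormalCone

lemma mem_normalCone_of_mem_polarBody {n : ℕ} {X : Set (EuclideanSpace ℝ (Fin n))}
    {f x : EuclideanSpace ℝ (Fin n)} (hf : f ∈ polarBody X) (hfx : ⟪f, x⟫ = 1) :
    f ∈ normalCone X x := fun z hz => hfx ▸ hf z hz

theorem singular_points_countable_dim_two_general (X : Set (EuclideanSpace ℝ (Fin 2))) :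
    {x ∈ frontier X | ∃ f g : EuclideanSpace ℝ (Fin 2), f ≠ g ∧
      f ∈ polarBody X ∧ g ∈ polarBody X ∧ ⟪f, x⟫ = 1 ∧ ⟪g, x⟫ = 1}.Countable := by
  refine (countable_setOf_interior_normalCone_nonempty (X := X)).mono ?_
  rintro x ⟨hx, f, g, hfg, hf, hg, hfx, hgx⟩
  refine ⟨frontier_subset_closure hx, interior_normalCone_nonempty_of_linearIndependent
    (linearIndependent_pair_of_inner_eq_one hfg hfx hgx) (by simp) ?_⟩
  exact Fin.forall_fin_two.mpr
    ⟨mem_normalCone_of_mem_polarBody hf hfx, mem_normalCone_of_mem_polarBody hg hgx⟩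

theorem singular_points_countable_dim_two (X : Set (EuclideanSpace ℝ (Fin 2)))
    (hXc : IsCompact X) (hXv : Convex ℝ X) (h0 : 0 ∈ interior X) :
    {x ∈ frontier X | ∃ f g : EuclideanSpace ℝ (Fin 2), f ≠ g ∧
      f ∈ polarBody X ∧ g ∈ polarBody X ∧ ⟪f, x⟫ = 1 ∧ ⟪g, x⟫ = 1}.Countable :=
  singular_points_countable_dim_two_general X
end

section
/- Let X ⊆ ℝⁿ be a compact convex body with 0 in its interior. The set of points of ∂X admitting a unique supporting hyperplane (the smooth points of the boundary) is dense in ∂X. -/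
open scoped RealInnerProductSpace MeasureTheory

/-!
Every boundary point `y` is approximated by interior points `p`. The largest ball around `p`
inside `X` touches the boundary at a point `x` no farther from `p` than `y`. A hyperplane supporting
`X` at `x` also supports that ball, so its normal is forced to be `x - p`: the point `x` is smooth.
-/

open Metric Set

section InnerProductSpace

variable {E : Type*} [NormedAddCommGroup E] [InnerProductSpace ℝ E]

theorem inner_le_one_of_mem_closure {X : Set E} {f z : E} (hf : ∀ w ∈ X, ⟪f, w⟫ ≤ 1)
    (hz : z ∈ closure X) : ⟪f, z⟫ ≤ 1 :=
  closure_minimal (t := {w | ⟪f, w⟫ ≤ 1}) hf (isClosed_le (by fun_prop) continuous_const) hz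

theorem smul_eq_norm_smul_sub_of_isMaxOn_closedBall {p x f : E}
    (hmax : IsMaxOn (⟪f, ·⟫) (closedBall p ‖x - p‖) x) :
    ‖x - p‖ • f = ‖f‖ • (x - p) := by
  rcases eq_or_ne f 0 with rfl | hf
  · simp
  have hnf : 0 < ‖f‖ := norm_pos_iff.mpr hf
  set r := ‖x - p‖
  -- the point of the ball where `⟪f, ·⟫` is largest; comparing with `x` gives equality in Cauchy–Schwarz
  have hz : p + (r / ‖f‖) • f ∈ closedBall p r := by
    rw [mem_closedBall, dist_eq_norm, add_sub_cancel_left, norm_smul, Real.norm_of_nonneg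
      (by positivity), div_mul_cancel₀ _ hnf.ne']
  have hlower : ‖f‖ * r ≤ ⟪f, x - p⟫ := by
    have : ⟪f, _⟫ ≤ ⟪f, x⟫ := hmax hz
    rw [inner_add_right, real_inner_smul_right, real_inner_self_eq_norm_mul_norm] at this
    rw [inner_sub_right]
    calc ‖f‖ * r = r / ‖f‖ * (‖f‖ * ‖f‖) := by field_simp
      _ ≤ ⟪f, x⟫ - ⟪f, p⟫ := by linarith
  exact inner_eq_norm_mul_iff_real.mp (le_antisymm (real_inner_le_norm f _) hlower)

theorem eq_of_inner_le_one_on_closedBall {p x f g : E} (hxp : x ≠ p)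
    (hf : ∀ z ∈ closedBall p ‖x - p‖, ⟪f, z⟫ ≤ 1) (hfx : ⟪f, x⟫ = 1)
    (hg : ∀ z ∈ closedBall p ‖x - p‖, ⟪g, z⟫ ≤ 1) (hgx : ⟪g, x⟫ = 1) : f = g := by
  have hr : ‖x - p‖ ≠ 0 := norm_ne_zero_iff.mpr (sub_ne_zero.mpr hxp)
  have hf' := smul_eq_norm_smul_sub_of_isMaxOn_closedBall (hfx ▸ hf)
  have hg' := smul_eq_norm_smul_sub_of_isMaxOn_closedBall (hgx ▸ hg)
  have hnorm {h : E} (hhx : ⟪h, x⟫ = 1) (hh : ‖x - p‖ • h = ‖h‖ • (x - p)) :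
      ‖x - p‖ = ‖h‖ * ⟪x - p, x⟫ := by
    simpa only [real_inner_smul_left, hhx, mul_one] using congrArg (⟪·, x⟫) hh
  have hfn := hnorm hfx hf'
  have hgn := hnorm hgx hg'
  have hxpx : ⟪x - p, x⟫ ≠ 0 := fun h ↦ hr (by rw [hfn, h, mul_zero])
  have hfg : ‖f‖ = ‖g‖ := mul_right_cancel₀ hxpx (hfn.symm.trans hgn)
  exact smul_right_injective E hr (hf'.trans (hfg ▸ hg'.symm))

theorem exists_inner_le_one_of_notMem_interior [CompleteSpace E] {X : Set E} {x : E}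
    (hXv : Convex ℝ X) (h0 : 0 ∈ interior X) (hx : x ∉ interior X) :
    ∃ f : E, (∀ z ∈ X, ⟪f, z⟫ ≤ 1) ∧ ⟪f, x⟫ = 1 := by
  obtain ⟨φ, hφ⟩ := geometric_hahn_banach_open_point hXv.interior isOpen_interior hx
  have hφx : 0 < φ x := by simpa using hφ 0 h0
  have hφle : ∀ z ∈ X, φ z ≤ φ x := by
    have hcl : X ⊆ closure (interior X) := by
      rw [hXv.closure_interior_eq_closure_of_nonempty_interior ⟨0, h0⟩]
      exact subset_closure
    exact fun z hz ↦ closure_minimal (fun w hw ↦ (hφ w hw).le)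
      (isClosed_le φ.continuous continuous_const) (hcl hz)
  have hdual (z : E) : ⟪(InnerProductSpace.toDual ℝ E).symm φ, z⟫ = φ z :=
    InnerProductSpace.toDual_symm_apply
  refine ⟨(φ x)⁻¹ • (InnerProductSpace.toDual ℝ E).symm φ, fun z hz ↦ ?_, ?_⟩
  · rw [real_inner_smul_left, hdual, inv_mul_le_iff₀ hφx, mul_one]
    exact hφle z hz
  · rw [real_inner_smul_left, hdual, inv_mul_cancel₀ hφx.ne']

theorem existsUnique_inner_eq_one_of_closedBall_subset_closure [CompleteSpace E] {X : Set E}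
    {p x : E} (hXv : Convex ℝ X) (h0 : 0 ∈ interior X) (hxp : x ≠ p)
    (hball : closedBall p ‖x - p‖ ⊆ closure X) (hx : x ∉ interior X) :
    ∃! f : E, (∀ z ∈ X, ⟪f, z⟫ ≤ 1) ∧ ⟪f, x⟫ = 1 := by
  obtain ⟨f, hf, hfx⟩ := exists_inner_le_one_of_notMem_interior hXv h0 hx
  have on_ball {g : E} (hg : ∀ z ∈ X, ⟪g, z⟫ ≤ 1) : ∀ z ∈ closedBall p ‖x - p‖, ⟪g, z⟫ ≤ 1 :=
    fun z hz ↦ inner_le_one_of_mem_closure hg (hball hz)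
  exact ⟨f, ⟨hf, hfx⟩, fun g ⟨hg, hgx⟩ ↦
    eq_of_inner_le_one_on_closedBall hxp (on_ball hg) hgx (on_ball hf) hfx⟩

end InnerProductSpace

/-- `x` is a point of `closure Xᶜ` nearest to `p`. -/
theorem exists_mem_frontier_closedBall_subset_closure {E : Type*} [NormedAddCommGroup E]
    [NormedSpace ℝ E] [ProperSpace E] {X : Set E} {p y : E} (hp : p ∈ interior X)
    (hy : y ∈ frontier X) :
    ∃ x ∈ frontier X, dist x p ≤ dist y p ∧ closedBall p (dist x p) ⊆ closure X := by
  have hyc : y ∈ closure Xᶜ := (frontier_eq_closure_inter_closure (s := X) ▸ hy).2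
  obtain ⟨x, hxc, hxd⟩ := isClosed_closure.exists_infDist_eq_dist ⟨y, hyc⟩ p
  rw [infDist_closure] at hxd
  have hr : 0 < infDist p Xᶜ := by
    rw [← infDist_closure, ← isClosed_closure.notMem_iff_infDist_pos ⟨y, hyc⟩, closure_compl]
    exact not_not_intro hp
  have hball : closedBall p (dist x p) ⊆ closure X := by
    rw [dist_comm, ← hxd, ← closure_ball p hr.ne']
    exact closure_mono ball_infDist_compl_subset
  have hxX : x ∈ closure X := hball (mem_closedBall.mpr le_rfl)
  refine ⟨x, frontier_eq_closure_inter_closure (s := X) ▸ ⟨hxX, hxc⟩, ?_, hball⟩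
  rw [dist_comm x, ← hxd, ← infDist_closure, dist_comm]
  exact infDist_le_dist_of_mem hyc

theorem smooth_points_dense_general {n : ℕ} (X : Set (EuclideanSpace ℝ (Fin n)))
    (hXv : Convex ℝ X) (h0 : 0 ∈ interior X) :
    ∀ y ∈ frontier X,
      y ∈ closure {x ∈ frontier X |
        ∃! f : EuclideanSpace ℝ (Fin n), f ∈ polarBody X ∧ ⟪f, x⟫ = 1} := by
  intro y hy
  rw [Metric.mem_closure_iff]
  intro ε hε
  have hy' : y ∈ closure (interior X) := by
    rw [hXv.closure_interior_eq_closure_of_nonempty_interior ⟨0, h0⟩]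
    exact hy.1
  obtain ⟨p, hp, hyp⟩ := Metric.mem_closure_iff.mp hy' (ε / 2) (half_pos hε)
  obtain ⟨x, hx, hxp, hball⟩ := exists_mem_frontier_closedBall_subset_closure hp hy
  have hxp_ne : x ≠ p := fun h ↦ hx.2 (h ▸ hp)
  refine ⟨x, ⟨hx, ?_⟩, ?_⟩
  · rw [dist_eq_norm] at hball
    exact existsUnique_inner_eq_one_of_closedBall_subset_closure hXv h0 hxp_ne hball hx.2
  · calc dist y x ≤ dist y p + dist x p := dist_triangle_right y x p
      _ < ε := by linarith

theorem smooth_points_dense {n : ℕ} (X : Set (EuclideanSpace ℝ (Fin n)))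
    (hXc : IsCompact X) (hXv : Convex ℝ X) (h0 : 0 ∈ interior X) :
    ∀ y ∈ frontier X,
      y ∈ closure {x ∈ frontier X |
        ∃! f : EuclideanSpace ℝ (Fin n), f ∈ polarBody X ∧ ⟪f, x⟫ = 1} :=
  smooth_points_dense_general X hXv h0
end
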